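/- arXiv:math/0607485 — 2 statements merged into one kernel-verified Lean document; each statement's English description precedes it below -/
import Mathlib

section
/- Let u be a solution of the capillary equation on [0, a] with u(0) = u₀ > 0, u'(0) = 0 and contact angle condition sin ψ(a) = cos γ for some γ ∈ [0, π/2). Then the rise height q = u(a) − u(0) satisfies both (1/(κ u₀))(1 − √(1 − a² κ² u₀²)) < q < (a/cos γ)(1 − sin γ) and q > 2a(1 − sin γ)/(1 + √(1 + 2κ a²(1 − sin γ))). -/
/-!
Along a solution `(sin ψ)' = κ u`, and `cos ψ + κ u² / 2` is a first integral, so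
`κ (u(a)² - u₀²) = 2 (1 - sin γ)` and `u ≥ u₀ > 0`. Hence `u'' > 0`: `u` is increasing and strictly
convex. Comparing `sin ψ` with `κ u₀ r` shows that the graph is steeper than the circular arc of
curvature `κ u₀`, which gives the first lower bound and `κ u₀ a < 1`; comparing it with the
primitive of the chord `κ (u₀ + (u(a) - u₀) r / a)` gives `2 cos γ < κ a (u₀ + u(a))`. Inserting
these two estimates into the first integral at `r = a` gives the upper and the second lower bound.
-/

open Real Set

theorem sub_lt_sub_of_hasDerivAt_lt {f g f' g' : ℝ → ℝ} {a b : ℝ} (hab : a < b)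
    (hf : ContinuousOn f (Icc a b)) (hg : ContinuousOn g (Icc a b))
    (hf' : ∀ x ∈ Ioo a b, HasDerivAt f (f' x) x) (hg' : ∀ x ∈ Ioo a b, HasDerivAt g (g' x) x)
    (hlt : ∀ x ∈ Ioo a b, f' x < g' x) : f b - f a < g b - g a := by
  have hmono : StrictMonoOn (g - f) (Icc a b) := by
    refine strictMonoOn_of_deriv_pos (convex_Icc a b) (hg.sub hf) fun x hx => ?_
    rw [interior_Icc] at hx
    rw [((hg' x hx).sub (hf' x hx)).deriv, sub_pos]
    exact hlt x hx
  have := hmono (left_mem_Icc.2 hab.le) (right_mem_Icc.2 hab.le) hab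
  simp only [Pi.sub_apply] at this
  linarith

theorem rpow_three_halves_eq_sqrt_mul {t : ℝ} (ht : 0 ≤ t) : t ^ ((3 : ℝ) / 2) = √t * t := by
  rw [show (3 : ℝ) / 2 = 1 / 2 + 1 by norm_num, rpow_add' ht (by norm_num), rpow_one,
    ← sqrt_eq_rpow]

theorem hasDerivAt_sqrt_one_add_sq (t : ℝ) :
    HasDerivAt (fun s => √(1 + s ^ 2)) (t / √(1 + t ^ 2)) t := by
  have hS : 0 < 1 + t ^ 2 := by positivity
  refine (((hasDerivAt_pow 2 t).const_add 1).sqrt hS.ne').congr_deriv ?_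
  field_simp
  norm_num

theorem hasDerivAt_div_sqrt_one_add_sq (t : ℝ) :
    HasDerivAt (fun s => s / √(1 + s ^ 2)) ((1 + t ^ 2) ^ ((3 : ℝ) / 2))⁻¹ t := by
  have hS : 0 < 1 + t ^ 2 := by positivity
  have hsq := sq_sqrt hS.le
  refine ((hasDerivAt_id t).div (hasDerivAt_sqrt_one_add_sq t)
    (sqrt_pos.2 hS).ne').congr_deriv ?_
  rw [rpow_three_halves_eq_sqrt_mul hS.le]
  field_simp
  simp only [id]
  linear_combination t ^ 2 * hsq

theorem hasDerivAt_inv_sqrt_one_add_sq (t : ℝ) :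
    HasDerivAt (fun s => (√(1 + s ^ 2))⁻¹) (-t * ((1 + t ^ 2) ^ ((3 : ℝ) / 2))⁻¹) t := by
  have hS : 0 < 1 + t ^ 2 := by positivity
  refine ((hasDerivAt_sqrt_one_add_sq t).inv (sqrt_pos.2 hS).ne').congr_deriv ?_
  rw [rpow_three_halves_eq_sqrt_mul hS.le, sq_sqrt hS.le]
  field_simp

theorem hasDerivAt_neg_sqrt_one_sub_sq_div {c x : ℝ} (hc : c ≠ 0) (hx : (c * x) ^ 2 < 1) :
    HasDerivAt (fun y => -√(1 - (c * y) ^ 2) / c) (c * x / √(1 - (c * x) ^ 2)) x := by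
  have hpos : 0 < 1 - (c * x) ^ 2 := by linarith
  refine (((((hasDerivAt_id x).const_mul c).pow 2).const_sub 1).sqrt hpos.ne').neg.div_const c
    |>.congr_deriv ?_
  simp only [Pi.pow_apply, id, mul_one]
  field_simp
  simp only [Nat.cast_ofNat, Nat.add_one_sub_one, pow_one]
  ring

theorem div_sqrt_one_sub_sq_lt {m t : ℝ} (hm : 0 ≤ m) (h : m < t / √(1 + t ^ 2)) :
    m / √(1 - m ^ 2) < t := by
  have hS : 0 < √(1 + t ^ 2) := sqrt_pos.2 (by positivity)
  have hS2 : √(1 + t ^ 2) ^ 2 = 1 + t ^ 2 := sq_sqrt (by positivity)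
  rw [lt_div_iff₀ hS] at h
  have ht : 0 < t := by nlinarith
  have htS : t < √(1 + t ^ 2) := (lt_sqrt ht.le).2 (by linarith)
  have hm1 : m < 1 := by nlinarith
  have hmt : m ^ 2 * (1 + t ^ 2) < t ^ 2 := by
    rw [← hS2, ← mul_pow]
    exact pow_lt_pow_left₀ h (by positivity) two_ne_zero
  have hR : 0 < √(1 - m ^ 2) := sqrt_pos.2 (by nlinarith)
  have hR2 : √(1 - m ^ 2) ^ 2 = 1 - m ^ 2 := sq_sqrt (by nlinarith)
  rw [div_lt_iff₀ hR]
  have hsq : m ^ 2 < (t * √(1 - m ^ 2)) ^ 2 := by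
    rw [mul_pow, hR2]
    linarith
  exact lt_of_pow_lt_pow_left₀ 2 (by positivity) hsq

/-- `C / (1 + √(1 + A * C))` is the positive root of `A q² + 2 q = C`. -/
theorem div_one_add_sqrt_lt {A C q : ℝ} (hA : 0 < A) (hC : 0 ≤ C) (hq : 0 ≤ q)
    (h : C < A * q ^ 2 + 2 * q) : C / (1 + √(1 + A * C)) < q := by
  have hR2 : √(1 + A * C) ^ 2 = 1 + A * C := sq_sqrt (by positivity)
  have hR : 0 ≤ √(1 + A * C) := sqrt_nonneg _
  have hlt : √(1 + A * C) < 1 + A * q := by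
    refine lt_of_pow_lt_pow_left₀ 2 (by positivity) ?_
    rw [hR2]
    nlinarith
  rw [div_lt_iff₀ (by positivity)]
  nlinarith

noncomputable def inclinationSin (u : ℝ → ℝ) (r : ℝ) : ℝ := deriv u r / √(1 + deriv u r ^ 2)

noncomputable def inclinationCos (u : ℝ → ℝ) (r : ℝ) : ℝ := (√(1 + deriv u r ^ 2))⁻¹

section Inclination

variable {u : ℝ → ℝ} {r : ℝ}

theorem inclinationCos_pos : 0 < inclinationCos u r :=
  inv_pos.2 (sqrt_pos.2 (by positivity))

theorem inclinationCos_le_one : inclinationCos u r ≤ 1 :=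
  inv_le_one_of_one_le₀ (one_le_sqrt.2 (le_add_of_nonneg_right (sq_nonneg _)))

theorem inclinationSin_sq_add_inclinationCos_sq :
    inclinationSin u r ^ 2 + inclinationCos u r ^ 2 = 1 := by
  have hS : 0 < 1 + deriv u r ^ 2 := by positivity
  rw [inclinationSin, inclinationCos, div_pow, inv_pow, sq_sqrt hS.le]
  field_simp
  ring

theorem inclinationSin_lt_one : inclinationSin u r < 1 := by
  nlinarith [inclinationSin_sq_add_inclinationCos_sq (u := u) (r := r),
    inclinationCos_pos (u := u) (r := r)]

end Inclination

structure IsCapillaryProfile (κ a : ℝ) (u : ℝ → ℝ) : Prop where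
  differentiable : Differentiable ℝ u
  differentiable_deriv : Differentiable ℝ (deriv u)
  deriv_deriv_eq : ∀ r ∈ Icc 0 a,
    deriv (deriv u) r = κ * u r * (1 + deriv u r ^ 2) ^ ((3 : ℝ) / 2)
  deriv_zero : deriv u 0 = 0

namespace IsCapillaryProfile

variable {κ a : ℝ} {u : ℝ → ℝ}

theorem hasDerivAt_inclinationSin (hu : IsCapillaryProfile κ a u) {x : ℝ} (hx : x ∈ Icc 0 a) :
    HasDerivAt (inclinationSin u) (κ * u x) x := by
  have hpos : 0 < (1 + deriv u x ^ 2) ^ ((3 : ℝ) / 2) := by positivity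
  refine ((hasDerivAt_div_sqrt_one_add_sq (deriv u x)).comp x
    (hu.differentiable_deriv x).hasDerivAt).congr_deriv ?_
  rw [hu.deriv_deriv_eq x hx]
  field_simp

theorem hasDerivAt_energy (hu : IsCapillaryProfile κ a u) {x : ℝ} (hx : x ∈ Icc 0 a) :
    HasDerivAt (fun r => inclinationCos u r + κ * u r ^ 2 / 2) 0 x := by
  have hpos : 0 < (1 + deriv u x ^ 2) ^ ((3 : ℝ) / 2) := by positivity
  have hcos : HasDerivAt (inclinationCos u) (-(deriv u x * κ * u x)) x := by
    refine ((hasDerivAt_inv_sqrt_one_add_sq (deriv u x)).comp x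
      (hu.differentiable_deriv x).hasDerivAt).congr_deriv ?_
    rw [hu.deriv_deriv_eq x hx]
    field_simp
  refine (hcos.add ((((hu.differentiable x).hasDerivAt.pow 2).const_mul κ).div_const 2))
    |>.congr_deriv ?_
  ring

theorem continuous_inclinationSin (hu : IsCapillaryProfile κ a u) :
    Continuous (inclinationSin u) :=
  have h := hu.differentiable_deriv.continuous
  h.div ((h.pow 2).const_add 1).sqrt fun _ => (sqrt_pos.2 (by positivity)).ne'

theorem continuous_inclinationCos (hu : IsCapillaryProfile κ a u) :
    Continuous (inclinationCos u) :=
  (hu.differentiable_deriv.continuous.pow 2 |>.const_add 1).sqrt.inv₀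
    fun x => (sqrt_pos.2 (by positivity : (0 : ℝ) < 1 + deriv u x ^ 2)).ne'

theorem energy_eq (hu : IsCapillaryProfile κ a u) {r : ℝ} (hr : r ∈ Icc 0 a) :
    inclinationCos u r + κ * u r ^ 2 / 2 = 1 + κ * u 0 ^ 2 / 2 := by
  have hcont : ContinuousOn (fun r => inclinationCos u r + κ * u r ^ 2 / 2) (Icc 0 a) :=
    (hu.continuous_inclinationCos.add
      ((hu.differentiable.continuous.pow 2).const_mul κ |>.div_const 2)).continuousOn
  rw [constant_of_has_deriv_right_zero hcont
    (fun x hx => (hu.hasDerivAt_energy (Ico_subset_Icc_self hx)).hasDerivWithinAt) r hr]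
  simp [inclinationCos, hu.deriv_zero]

theorem apply_zero_le (hu : IsCapillaryProfile κ a u) (hκ : 0 < κ) (h0 : 0 < u 0) {r : ℝ}
    (hr : r ∈ Icc 0 a) : u 0 ≤ u r := by
  have hsq : ∀ x ∈ Icc 0 a, u 0 ^ 2 ≤ u x ^ 2 := fun x hx => by
    have := hu.energy_eq hx
    have := inclinationCos_le_one (u := u) (r := x)
    nlinarith
  by_contra! hlt
  have hneg : u r < 0 := by nlinarith [hsq r hr]
  obtain ⟨t, ht, hut⟩ := intermediate_value_Icc' hr.1 hu.differentiable.continuous.continuousOn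
    ⟨hneg.le, h0.le⟩
  have := hsq t ⟨ht.1, ht.2.trans hr.2⟩
  rw [hut] at this
  nlinarith

theorem deriv_deriv_pos (hu : IsCapillaryProfile κ a u) (hκ : 0 < κ) (h0 : 0 < u 0) {r : ℝ}
    (hr : r ∈ Icc 0 a) : 0 < deriv (deriv u) r := by
  rw [hu.deriv_deriv_eq r hr]
  have := h0.trans_le (hu.apply_zero_le hκ h0 hr)
  positivity

theorem deriv_pos (hu : IsCapillaryProfile κ a u) (hκ : 0 < κ) (h0 : 0 < u 0) {r : ℝ}
    (hr : r ∈ Ioc 0 a) : 0 < deriv u r := by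
  have hmono : StrictMonoOn (deriv u) (Icc 0 a) :=
    strictMonoOn_of_deriv_pos (convex_Icc 0 a) hu.differentiable_deriv.continuous.continuousOn
      fun x hx => hu.deriv_deriv_pos hκ h0 (interior_subset hx)
  simpa [hu.deriv_zero] using hmono ⟨le_rfl, hr.1.le.trans hr.2⟩ (Ioc_subset_Icc_self hr) hr.1

theorem apply_zero_lt (hu : IsCapillaryProfile κ a u) (hκ : 0 < κ) (h0 : 0 < u 0) {r : ℝ}
    (hr : r ∈ Ioc 0 a) : u 0 < u r := by
  have hmono : StrictMonoOn u (Icc 0 a) :=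
    strictMonoOn_of_deriv_pos (convex_Icc 0 a) hu.differentiable.continuous.continuousOn
      fun x hx => by
        rw [interior_Icc] at hx
        exact hu.deriv_pos hκ h0 (Ioo_subset_Ioc_self hx)
  exact hmono ⟨le_rfl, hr.1.le.trans hr.2⟩ (Ioc_subset_Icc_self hr) hr.1

theorem inclinationSin_zero (hu : IsCapillaryProfile κ a u) : inclinationSin u 0 = 0 := by
  simp [inclinationSin, hu.deriv_zero]

theorem mul_lt_inclinationSin (hu : IsCapillaryProfile κ a u) (hκ : 0 < κ) (h0 : 0 < u 0)
    {r : ℝ} (hr : r ∈ Ioc 0 a) : κ * u 0 * r < inclinationSin u r := by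
  have hsub : Icc 0 r ⊆ Icc 0 a := Icc_subset_Icc_right hr.2
  have := sub_lt_sub_of_hasDerivAt_lt (f := fun x => κ * u 0 * x) hr.1
    (continuous_const.mul continuous_id).continuousOn
    (hu.continuous_inclinationSin.continuousOn)
    (fun x _ => (hasDerivAt_id x).const_mul (κ * u 0))
    (fun x hx => hu.hasDerivAt_inclinationSin (hsub (Ioo_subset_Icc_self hx)))
    (fun x hx => by
      have := hu.apply_zero_lt hκ h0 ⟨hx.1, hx.2.le.trans hr.2⟩
      simp only [mul_one]
      gcongr)
  simpa [hu.inclinationSin_zero] using this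

theorem apply_lt_chord (hu : IsCapillaryProfile κ a u) (hκ : 0 < κ) (h0 : 0 < u 0) {x : ℝ}
    (hx : x ∈ Ioo 0 a) : u x < u 0 + (u a - u 0) * x / a := by
  have ha : 0 < a := hx.1.trans hx.2
  have hconv : StrictConvexOn ℝ (Icc 0 a) u :=
    strictConvexOn_of_deriv2_pos (convex_Icc 0 a) hu.differentiable.continuous.continuousOn
      fun y hy => hu.deriv_deriv_pos hκ h0 (interior_subset hy)
  have h := hconv.2 (left_mem_Icc.2 ha.le) (right_mem_Icc.2 ha.le) ha.ne
    (show 0 < 1 - x / a by rw [sub_pos, div_lt_one ha]; exact hx.2) (div_pos hx.1 ha)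
    (by ring)
  simp only [smul_eq_mul, mul_zero, zero_add, div_mul_cancel₀ x ha.ne'] at h
  calc u x < (1 - x / a) * u 0 + x / a * u a := h
    _ = u 0 + (u a - u 0) * x / a := by ring

theorem two_mul_inclinationSin_lt (hu : IsCapillaryProfile κ a u) (hκ : 0 < κ) (h0 : 0 < u 0)
    (ha : 0 < a) : 2 * inclinationSin u a < κ * a * (u 0 + u a) := by
  have hpoly : ∀ x, HasDerivAt (fun y => κ * u 0 * y + κ * (u a - u 0) / (2 * a) * y ^ 2)
      (κ * (u 0 + (u a - u 0) * x / a)) x := fun x => by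
    refine (((hasDerivAt_id x).const_mul _).add ((hasDerivAt_pow 2 x).const_mul _)).congr_deriv ?_
    field_simp
    simp only [Nat.cast_ofNat, Nat.add_one_sub_one, pow_one]
    ring
  have := sub_lt_sub_of_hasDerivAt_lt ha hu.continuous_inclinationSin.continuousOn
    (by fun_prop) (fun x hx => hu.hasDerivAt_inclinationSin (Ioo_subset_Icc_self hx))
    (fun x _ => hpoly x)
    (fun x hx => mul_lt_mul_of_pos_left (hu.apply_lt_chord hκ h0 hx) hκ)
  have hval : κ * u 0 * a + κ * (u a - u 0) / (2 * a) * a ^ 2 = κ * a * (u 0 + u a) / 2 := by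
    field_simp
    ring
  rw [hu.inclinationSin_zero] at this
  linarith

theorem mul_sq_sub_sq_eq (hu : IsCapillaryProfile κ a u) (ha : 0 ≤ a) :
    κ * (u a ^ 2 - u 0 ^ 2) = 2 * (1 - inclinationCos u a) := by
  linarith [hu.energy_eq (right_mem_Icc.2 ha)]

theorem mul_lt_one (hu : IsCapillaryProfile κ a u) (hκ : 0 < κ) (h0 : 0 < u 0) (ha : 0 < a) :
    κ * u 0 * a < 1 :=
  (hu.mul_lt_inclinationSin hκ h0 ⟨ha, le_rfl⟩).trans inclinationSin_lt_one

theorem arc_rise_lt_sub (hu : IsCapillaryProfile κ a u) (hκ : 0 < κ) (h0 : 0 < u 0)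
    (ha : 0 < a) : 1 / (κ * u 0) * (1 - √(1 - a ^ 2 * κ ^ 2 * u 0 ^ 2)) < u a - u 0 := by
  set c := κ * u 0
  have hc : 0 < c := mul_pos hκ h0
  have hca : c * a < 1 := hu.mul_lt_one hκ h0 ha
  have hcx : ∀ x ∈ Ioo 0 a, 0 < c * x ∧ c * x < 1 := fun x hx =>
    ⟨mul_pos hc hx.1, (mul_lt_mul_of_pos_left hx.2 hc).trans hca⟩
  have := sub_lt_sub_of_hasDerivAt_lt (f := fun y => -√(1 - (c * y) ^ 2) / c) ha
    (by fun_prop) hu.differentiable.continuous.continuousOn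
    (fun x hx => hasDerivAt_neg_sqrt_one_sub_sq_div hc.ne' (by nlinarith [hcx x hx]))
    (fun x _ => (hu.differentiable x).hasDerivAt)
    (fun x hx => div_sqrt_one_sub_sq_lt (hcx x hx).1.le
      (hu.mul_lt_inclinationSin hκ h0 ⟨hx.1, hx.2.le⟩))
  calc 1 / c * (1 - √(1 - a ^ 2 * κ ^ 2 * u 0 ^ 2))
      = -√(1 - (c * a) ^ 2) / c - -√(1 - (c * 0) ^ 2) / c := by
        rw [show a ^ 2 * κ ^ 2 * u 0 ^ 2 = (c * a) ^ 2 by ring, mul_zero,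
          zero_pow two_ne_zero, sub_zero, sqrt_one]
        ring
    _ < u a - u 0 := this

theorem sub_lt_div_mul (hu : IsCapillaryProfile κ a u) (hκ : 0 < κ) (h0 : 0 < u 0)
    (ha : 0 < a) : u a - u 0 < a / inclinationSin u a * (1 - inclinationCos u a) := by
  have hs : 0 < inclinationSin u a :=
    lt_of_le_of_lt (by positivity) (hu.mul_lt_inclinationSin hκ h0 ⟨ha, le_rfl⟩)
  have hq : 0 < u a - u 0 := sub_pos.2 (hu.apply_zero_lt hκ h0 ⟨ha, le_rfl⟩)
  have hrise := hu.mul_sq_sub_sq_eq ha.le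
  have := mul_lt_mul_of_pos_left (hu.two_mul_inclinationSin_lt hκ h0 ha) hq
  rw [div_mul_eq_mul_div, lt_div_iff₀ hs]
  nlinarith

theorem div_one_add_sqrt_lt_sub (hu : IsCapillaryProfile κ a u) (hκ : 0 < κ) (h0 : 0 < u 0)
    (ha : 0 < a) :
    2 * a * (1 - inclinationCos u a) /
      (1 + √(1 + 2 * κ * a ^ 2 * (1 - inclinationCos u a))) < u a - u 0 := by
  have hq : 0 < u a - u 0 := sub_pos.2 (hu.apply_zero_lt hκ h0 ⟨ha, le_rfl⟩)
  have hrise := hu.mul_sq_sub_sq_eq ha.le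
  have := mul_lt_mul_of_pos_right (hu.mul_lt_one hκ h0 ha) hq
  rw [show 2 * κ * a ^ 2 * (1 - inclinationCos u a) = κ * a * (2 * a * (1 - inclinationCos u a))
    by ring]
  refine div_one_add_sqrt_lt (by positivity)
    (mul_nonneg (by positivity) (sub_nonneg.2 inclinationCos_le_one)) hq.le ?_
  nlinarith

end IsCapillaryProfile

/-- bounds for the rise height q = u(a) − u(0):
(1/(κu₀))(1 − √(1 − a²κ²u₀²)) < q < (a/cos γ)(1 − sin γ) and
q > 2a(1 − sin γ)/(1 + √(1 + 2κa²(1 − sin γ))). -/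
theorem stmt_12 (κ a u₀ γ : ℝ) (hκ : 0 < κ) (ha : 0 < a) (u : ℝ → ℝ)
    (hu : Differentiable ℝ u) (hu' : Differentiable ℝ (deriv u))
    (hode : ∀ r ∈ Set.Icc (0 : ℝ) a,
      deriv (deriv u) r = κ * u r * (1 + (deriv u r) ^ 2) ^ ((3 : ℝ) / 2))
    (hu0 : u 0 = u₀) (hu₀pos : 0 < u₀) (hdu0 : deriv u 0 = 0)
    (hγ0 : 0 ≤ γ) (hγ1 : γ < Real.pi / 2)
    (hangle : deriv u a / Real.sqrt (1 + (deriv u a) ^ 2) = Real.cos γ) :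
    (1 / (κ * u₀)) * (1 - Real.sqrt (1 - a ^ 2 * κ ^ 2 * u₀ ^ 2)) < u a - u 0 ∧
    u a - u 0 < (a / Real.cos γ) * (1 - Real.sin γ) ∧
    u a - u 0 >
      2 * a * (1 - Real.sin γ) /
        (1 + Real.sqrt (1 + 2 * κ * a ^ 2 * (1 - Real.sin γ))) := by
  have hcap : IsCapillaryProfile κ a u := ⟨hu, hu', hode, hdu0⟩
  subst hu0
  have hcos : Real.cos γ = inclinationSin u a := hangle.symm
  have hsin : Real.sin γ = inclinationCos u a := by
    refine (sq_eq_sq₀ (sin_nonneg_of_nonneg_of_le_pi hγ0 (by linarith [pi_pos]))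
      inclinationCos_pos.le).1 ?_
    rw [sin_sq, hcos]
    linarith [inclinationSin_sq_add_inclinationCos_sq (u := u) (r := a)]
  rw [hcos, hsin]
  exact ⟨hcap.arc_rise_lt_sub hκ hu₀pos ha, hcap.sub_lt_div_mul hκ hu₀pos ha,
    hcap.div_one_add_sqrt_lt_sub hκ hu₀pos ha⟩
end

section
/- Let u be a solution of the capillary equation on [0, a] with u(0) = u₀ > 0, u'(0) = 0 and contact angle condition sin ψ(a) = cos γ for some γ ∈ [0, π/2). Then 2(1 − sin γ)/(κ f(γ)) < u(a) − u₀ < a(1 − sin γ)/cos γ, where f(γ) = 2 cos γ/(κ a) − (a tan γ)/2 + (a/(2 cos² γ))(π/2 − γ). -/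
/-!
Write `ψ = arctan u'` for the inclination angle. The equation says `(sin ψ)' = κ u` and
`(cos ψ)' = -κ u u'`. A first-zero argument shows `u > 0`, so `ψ` and `u` increase on `[0, a]`.
Then `sin ψ` is strictly convex, hence lies below its chord `c t` with `c = sin ψ(a) / a =
cos γ / a`, and `u' = tan ψ < c t / √(1 - (c t)²)`. Integrating this bound gives the upper
estimate. For the lower one, `cos ψ + κ u² / 2` is constant, so
`κ (u(a)² - u₀²) = 2 (1 - sin γ)`, and it remains to bound `u(a) + u₀` from above: integrate
`((2 t - a) u)'`, use `∫ κ u = sin ψ(a)`, and `(2 t - a) u' < t u' < c t² / √(1 - (c t)²)`.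
-/

open Real Set intervalIntegral

theorem one_sub_mul_sq_pos {a c t : ℝ} (hc : 0 ≤ c) (hca : c * a < 1) (ht : t ∈ Icc 0 a) :
    0 < 1 - (c * t) ^ 2 := by
  have h0 : 0 ≤ c * t := mul_nonneg hc ht.1
  have h1 : c * t < 1 := (mul_le_mul_of_nonneg_left ht.2 hc).trans_lt hca
  nlinarith

theorem continuousOn_mul_div_sqrt_one_sub_sq {a c : ℝ} (hc : 0 ≤ c) (hca : c * a < 1) :
    ContinuousOn (fun t => c * t / √(1 - (c * t) ^ 2)) (Icc 0 a) :=
  (continuousOn_const.mul continuousOn_id).div (by fun_prop) fun t ht =>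
    (sqrt_pos.2 (one_sub_mul_sq_pos hc hca ht)).ne'

theorem integral_mul_div_sqrt_one_sub_sq {a c : ℝ} (ha : 0 ≤ a) (hc : 0 < c) (hca : c * a < 1) :
    ∫ t in 0..a, c * t / √(1 - (c * t) ^ 2) = (1 - √(1 - (c * a) ^ 2)) / c := by
  have hderiv : ∀ t ∈ uIcc 0 a,
      HasDerivAt (fun t => -√(1 - (c * t) ^ 2) / c) (c * t / √(1 - (c * t) ^ 2)) t := by
    intro t ht
    rw [uIcc_of_le ha] at ht
    have hpos := one_sub_mul_sq_pos hc.le hca ht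
    have h := ((((hasDerivAt_id t).const_mul c).pow 2).const_sub 1).sqrt hpos.ne' |>.neg.div_const c
    refine h.congr_deriv ?_
    simp only [id, Pi.pow_apply]
    field_simp
    ring
  rw [integral_eq_sub_of_hasDerivAt hderiv
    ((continuousOn_mul_div_sqrt_one_sub_sq hc.le hca).intervalIntegrable_of_Icc ha),
    mul_zero, zero_pow two_ne_zero, sub_zero, sqrt_one]
  ring

theorem integral_mul_mul_div_sqrt_one_sub_sq {a c : ℝ} (ha : 0 ≤ a) (hc : 0 < c)
    (hca : c * a < 1) :
    ∫ t in 0..a, t * (c * t / √(1 - (c * t) ^ 2)) =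
      (arcsin (c * a) - c * a * √(1 - (c * a) ^ 2)) / (2 * c ^ 2) := by
  have hderiv : ∀ t ∈ uIcc 0 a,
      HasDerivAt (fun t => (arcsin (c * t) - c * t * √(1 - (c * t) ^ 2)) / (2 * c ^ 2))
        (t * (c * t / √(1 - (c * t) ^ 2))) t := by
    intro t ht
    rw [uIcc_of_le ha] at ht
    have hpos := one_sub_mul_sq_pos hc.le hca ht
    have hct : HasDerivAt (fun t => c * t) c t := by simpa using (hasDerivAt_id t).const_mul c
    have hct1 : c * t < 1 := (mul_le_mul_of_nonneg_left ht.2 hc.le).trans_lt hca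
    have harcsin := (hasDerivAt_arcsin (by nlinarith [mul_nonneg hc.le ht.1]) hct1.ne).comp t hct
    have h := (harcsin.sub (hct.mul (((hct.pow 2).const_sub 1).sqrt hpos.ne'))).div_const
      (2 * c ^ 2)
    refine h.congr_deriv ?_
    have hsq := sq_sqrt hpos.le
    have hw := sqrt_pos.2 hpos
    simp only [Pi.pow_apply]
    generalize √(1 - (c * t) ^ 2) = w at hsq hw ⊢
    field_simp
    linear_combination (-2) * hsq
  rw [integral_eq_sub_of_hasDerivAt hderiv
    ((continuousOn_id.mul
      (continuousOn_mul_div_sqrt_one_sub_sq hc.le hca)).intervalIntegrable_of_Icc ha)]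
  simp

theorem integral_lt_integral_of_lt_on_Ioo {f g : ℝ → ℝ} {a b : ℝ} (hab : a < b)
    (hf : IntervalIntegrable f MeasureTheory.volume a b)
    (hg : IntervalIntegrable g MeasureTheory.volume a b)
    (hlt : ∀ x ∈ Ioo a b, f x < g x) : ∫ x in a..b, f x < ∫ x in a..b, g x := by
  have h := intervalIntegral_pos_of_pos_on (hg.sub hf) (fun x hx => sub_pos.2 (hlt x hx)) hab
  rwa [integral_sub hg hf, sub_pos] at h

theorem sin_arctan_lt_one (x : ℝ) : sin (arctan x) < 1 := by
  simpa using sin_lt_sin_of_lt_of_le_pi_div_two (neg_pi_div_two_lt_arctan x).le le_rfl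
    (arctan_lt_pi_div_two x)

theorem lt_div_sqrt_one_sub_sq_of_sin_arctan_lt {x y : ℝ} (hxy : sin (arctan x) < y)
    (hy : y < 1) : x < y / √(1 - y ^ 2) := by
  have hlo := neg_pi_div_two_lt_arctan x
  have hhi := arctan_lt_pi_div_two x
  have harcsin : arctan x < arcsin y := (lt_arcsin_iff_sin_lt' ⟨hlo.le, hhi⟩).2 hxy
  rw [← tan_arctan x, ← tan_arcsin y]
  exact strictMonoOn_tan ⟨hlo, hhi⟩ ⟨hlo.trans harcsin, arcsin_lt_pi_div_two.2 hy⟩ harcsin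

structure IsCapillarySolution (κ a : ℝ) (u : ℝ → ℝ) : Prop where
  differentiable : Differentiable ℝ u
  differentiable_deriv : Differentiable ℝ (deriv u)
  deriv_deriv :
    ∀ r ∈ Icc 0 a, deriv (deriv u) r = κ * u r * (1 + deriv u r ^ 2) ^ ((3 : ℝ) / 2)

noncomputable def inclination (u : ℝ → ℝ) (r : ℝ) : ℝ := arctan (deriv u r)

theorem cos_inclination_pos (u : ℝ → ℝ) (r : ℝ) : 0 < cos (inclination u r) :=
  cos_arctan_pos _

theorem inclination_eq_zero {u : ℝ → ℝ} {r : ℝ} (hr : deriv u r = 0) :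
    inclination u r = 0 := by
  rw [inclination, hr, arctan_zero]

theorem sqrt_one_sub_sin_inclination_sq (u : ℝ → ℝ) (r : ℝ) :
    √(1 - sin (inclination u r) ^ 2) = cos (inclination u r) :=
  (cos_eq_sqrt_one_sub_sin_sq (neg_pi_div_two_lt_arctan _).le (arctan_lt_pi_div_two _).le).symm

theorem arcsin_sin_inclination (u : ℝ → ℝ) (r : ℝ) :
    arcsin (sin (inclination u r)) = inclination u r :=
  arcsin_sin (neg_pi_div_two_lt_arctan _).le (arctan_lt_pi_div_two _).le

theorem two_mul_integral_add_integral_mul_deriv {u : ℝ → ℝ} {a : ℝ}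
    (hu : Differentiable ℝ u) (hu' : Continuous (deriv u)) :
    2 * (∫ t in 0..a, u t) + ∫ t in 0..a, (2 * t - a) * deriv u t = a * (u a + u 0) := by
  have hderiv : ∀ t ∈ uIcc 0 a, HasDerivAt (fun t => (2 * t - a) * u t)
      (2 * u t + (2 * t - a) * deriv u t) t := fun t _ => by
    refine ((((hasDerivAt_id t).const_mul 2).sub_const a).mul (hu t).hasDerivAt).congr_deriv ?_
    simp only [id, mul_one]
  have hcont := hu.continuous
  rw [← integral_const_mul, ← integral_add (Continuous.intervalIntegrable (by fun_prop) 0 a)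
    (Continuous.intervalIntegrable (by fun_prop) 0 a), integral_eq_sub_of_hasDerivAt hderiv
    (Continuous.intervalIntegrable (by fun_prop) 0 a)]
  ring

namespace IsCapillarySolution

variable {κ a : ℝ} {u : ℝ → ℝ}

theorem continuous_inclination (h : IsCapillarySolution κ a u) : Continuous (inclination u) :=
  continuous_arctan.comp h.differentiable_deriv.continuous

theorem hasDerivAt_inclination (h : IsCapillarySolution κ a u) {r : ℝ} (hr : r ∈ Icc 0 a) :
    HasDerivAt (inclination u) (κ * u r / cos (inclination u r)) r := by
  have hq : 0 < 1 + deriv u r ^ 2 := by positivity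
  have h32 :
      (1 + deriv u r ^ 2) ^ ((3 : ℝ) / 2) = (1 + deriv u r ^ 2) * √(1 + deriv u r ^ 2) := by
    rw [show (3 : ℝ) / 2 = 1 + 1 / 2 by norm_num, rpow_add hq, rpow_one, sqrt_eq_rpow]
  refine ((hasDerivAt_arctan _).comp r (h.differentiable_deriv r).hasDerivAt).congr_deriv ?_
  rw [inclination, cos_arctan, h.deriv_deriv r hr, h32]
  field_simp

theorem hasDerivAt_sin_inclination (h : IsCapillarySolution κ a u) {r : ℝ} (hr : r ∈ Icc 0 a) :
    HasDerivAt (fun r => sin (inclination u r)) (κ * u r) r := by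
  refine (h.hasDerivAt_inclination hr).sin.congr_deriv ?_
  field_simp [(cos_inclination_pos u r).ne']

theorem hasDerivAt_cos_inclination (h : IsCapillarySolution κ a u) {r : ℝ} (hr : r ∈ Icc 0 a) :
    HasDerivAt (fun r => cos (inclination u r)) (-(κ * u r * deriv u r)) r := by
  have htan : deriv u r = sin (inclination u r) / cos (inclination u r) := by
    rw [← tan_eq_sin_div_cos, inclination, tan_arctan]
  refine (h.hasDerivAt_inclination hr).cos.congr_deriv ?_
  rw [htan]
  ring

theorem strictMonoOn_inclination (h : IsCapillarySolution κ a u) (hκ : 0 < κ) {t : ℝ}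
    (hta : t ≤ a) (hpos : ∀ x ∈ Ioo 0 t, 0 < u x) :
    StrictMonoOn (inclination u) (Icc 0 t) := by
  refine strictMonoOn_of_deriv_pos (convex_Icc 0 t) h.continuous_inclination.continuousOn
    fun x hx => ?_
  rw [interior_Icc] at hx
  rw [(h.hasDerivAt_inclination ⟨hx.1.le, hx.2.le.trans hta⟩).deriv]
  exact div_pos (mul_pos hκ (hpos x hx)) (cos_inclination_pos u x)

theorem strictMonoOn_of_pos (h : IsCapillarySolution κ a u) (hκ : 0 < κ)
    (hdu0 : deriv u 0 = 0) {t : ℝ} (hta : t ≤ a) (hpos : ∀ x ∈ Ioo 0 t, 0 < u x) :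
    StrictMonoOn u (Icc 0 t) := by
  refine strictMonoOn_of_deriv_pos (convex_Icc 0 t) h.differentiable.continuous.continuousOn
    fun x hx => ?_
  rw [interior_Icc] at hx
  have hψ := h.strictMonoOn_inclination hκ hta hpos (left_mem_Icc.2 (hx.1.le.trans hx.2.le))
    (Ioo_subset_Icc_self hx) hx.1
  rwa [inclination_eq_zero hdu0, inclination, arctan_pos] at hψ

theorem pos (h : IsCapillarySolution κ a u) (hκ : 0 < κ) (hu0 : 0 < u 0)
    (hdu0 : deriv u 0 = 0) {t : ℝ} (ht : t ∈ Icc 0 a) : 0 < u t := by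
  by_contra! hut
  set S := Icc 0 a ∩ {x | u x ≤ 0}
  have hS : IsClosed S :=
    isClosed_Icc.inter (isClosed_le h.differentiable.continuous continuous_const)
  have hbdd : BddBelow S := ⟨0, fun x hx => hx.1.1⟩
  have hmem := hS.csInf_mem ⟨t, ht, hut⟩ hbdd
  obtain ⟨ht₀, ht₀a⟩ := hmem.1
  have hut₀ : u (sInf S) ≤ 0 := hmem.2
  -- `sInf S` is the first zero of `u`, and `u` increases before it
  have hpos : ∀ x ∈ Ioo 0 (sInf S), 0 < u x := fun x hx => by
    by_contra! hux
    exact (csInf_le hbdd ⟨⟨hx.1.le, hx.2.le.trans ht₀a⟩, hux⟩).not_gt hx.2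
  have ht₀pos : 0 < sInf S := ht₀.lt_of_ne fun h0 => by rw [← h0] at hut₀; linarith
  have := h.strictMonoOn_of_pos hκ hdu0 ht₀a hpos (left_mem_Icc.2 ht₀) (right_mem_Icc.2 ht₀)
    ht₀pos
  linarith

theorem strictMonoOn (h : IsCapillarySolution κ a u) (hκ : 0 < κ) (hu0 : 0 < u 0)
    (hdu0 : deriv u 0 = 0) : StrictMonoOn u (Icc 0 a) :=
  h.strictMonoOn_of_pos hκ hdu0 le_rfl fun _ hx => h.pos hκ hu0 hdu0 (Ioo_subset_Icc_self hx)

theorem inclination_pos (h : IsCapillarySolution κ a u) (hκ : 0 < κ) (hu0 : 0 < u 0)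
    (hdu0 : deriv u 0 = 0) {t : ℝ} (ht : t ∈ Ioc 0 a) : 0 < inclination u t := by
  have := h.strictMonoOn_inclination hκ le_rfl
    (fun _ hx => h.pos hκ hu0 hdu0 (Ioo_subset_Icc_self hx))
    (left_mem_Icc.2 (ht.1.le.trans ht.2)) (Ioc_subset_Icc_self ht) ht.1
  rwa [inclination_eq_zero hdu0] at this

theorem deriv_pos (h : IsCapillarySolution κ a u) (hκ : 0 < κ) (hu0 : 0 < u 0)
    (hdu0 : deriv u 0 = 0) {t : ℝ} (ht : t ∈ Ioc 0 a) : 0 < deriv u t :=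
  arctan_pos.1 (h.inclination_pos hκ hu0 hdu0 ht)

theorem sin_inclination_pos (h : IsCapillarySolution κ a u) (hκ : 0 < κ) (ha : 0 < a)
    (hu0 : 0 < u 0) (hdu0 : deriv u 0 = 0) : 0 < sin (inclination u a) :=
  sin_pos_of_pos_of_lt_pi (h.inclination_pos hκ hu0 hdu0 (right_mem_Ioc.2 ha))
    ((arctan_lt_pi_div_two _).trans (by linarith [pi_pos]))

theorem strictConvexOn_sin_inclination (h : IsCapillarySolution κ a u) (hκ : 0 < κ)
    (hu0 : 0 < u 0) (hdu0 : deriv u 0 = 0) :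
    StrictConvexOn ℝ (Icc 0 a) (fun r => sin (inclination u r)) := by
  refine StrictMonoOn.strictConvexOn_of_deriv (convex_Icc 0 a)
    (continuous_sin.comp h.continuous_inclination).continuousOn ?_
  rw [interior_Icc]
  intro x hx y hy hxy
  rw [(h.hasDerivAt_sin_inclination (Ioo_subset_Icc_self hx)).deriv,
    (h.hasDerivAt_sin_inclination (Ioo_subset_Icc_self hy)).deriv]
  exact mul_lt_mul_of_pos_left
    (h.strictMonoOn hκ hu0 hdu0 (Ioo_subset_Icc_self hx) (Ioo_subset_Icc_self hy) hxy) hκ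

theorem sin_inclination_lt (h : IsCapillarySolution κ a u) (hκ : 0 < κ) (hu0 : 0 < u 0)
    (hdu0 : deriv u 0 = 0) {t : ℝ} (ht : t ∈ Ioo 0 a) :
    sin (inclination u t) < sin (inclination u a) / a * t := by
  have ha : 0 < a := ht.1.trans ht.2
  have hchord := (h.strictConvexOn_sin_inclination hκ hu0 hdu0).secant_strict_mono_aux1
    (left_mem_Icc.2 ha.le) (right_mem_Icc.2 ha.le) ht.1 ht.2
  simp only [inclination_eq_zero hdu0, sin_zero, sub_zero, mul_zero, zero_add] at hchord
  rw [div_mul_eq_mul_div, lt_div_iff₀ ha]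
  linarith

theorem deriv_lt (h : IsCapillarySolution κ a u) (hκ : 0 < κ) (hu0 : 0 < u 0)
    (hdu0 : deriv u 0 = 0) {t : ℝ} (ht : t ∈ Ioo 0 a) :
    deriv u t < sin (inclination u a) / a * t / √(1 - (sin (inclination u a) / a * t) ^ 2) := by
  have ha : 0 < a := ht.1.trans ht.2
  refine lt_div_sqrt_one_sub_sq_of_sin_arctan_lt (h.sin_inclination_lt hκ hu0 hdu0 ht) ?_
  calc sin (inclination u a) / a * t
      < sin (inclination u a) / a * a :=
        mul_lt_mul_of_pos_left ht.2 (div_pos (h.sin_inclination_pos hκ ha hu0 hdu0) ha)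
    _ = sin (inclination u a) := div_mul_cancel₀ _ ha.ne'
    _ < 1 := sin_arctan_lt_one _

theorem integral_eq_sin_inclination (h : IsCapillarySolution κ a u) (ha : 0 ≤ a)
    (hdu0 : deriv u 0 = 0) : κ * ∫ t in 0..a, u t = sin (inclination u a) := by
  rw [← integral_const_mul, integral_eq_sub_of_hasDerivAt
    (fun t ht => h.hasDerivAt_sin_inclination (uIcc_of_le ha ▸ ht))
    ((continuous_const.mul h.differentiable.continuous).intervalIntegrable 0 a),
    inclination_eq_zero hdu0, sin_zero, sub_zero]

theorem energy (h : IsCapillarySolution κ a u) (ha : 0 ≤ a) (hdu0 : deriv u 0 = 0) :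
    κ / 2 * (u a ^ 2 - u 0 ^ 2) = 1 - cos (inclination u a) := by
  have hderiv : ∀ t ∈ uIcc 0 a,
      HasDerivAt (fun r => cos (inclination u r) + κ / 2 * u r ^ 2) 0 t := fun t ht => by
    refine ((h.hasDerivAt_cos_inclination (uIcc_of_le ha ▸ ht)).add
      (((h.differentiable t).hasDerivAt.pow 2).const_mul (κ / 2))).congr_deriv ?_
    ring
  have hconst := integral_eq_sub_of_hasDerivAt hderiv intervalIntegrable_const
  rw [integral_zero, inclination_eq_zero hdu0, cos_zero] at hconst
  linarith

theorem sub_lt (h : IsCapillarySolution κ a u) (hκ : 0 < κ) (ha : 0 < a) (hu0 : 0 < u 0)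
    (hdu0 : deriv u 0 = 0) :
    u a - u 0 < a * (1 - cos (inclination u a)) / sin (inclination u a) := by
  have hσ := h.sin_inclination_pos hκ ha hu0 hdu0
  set σ := sin (inclination u a)
  have hc : 0 < σ / a := div_pos hσ ha
  have hca : σ / a * a = σ := div_mul_cancel₀ σ ha.ne'
  have hca1 : σ / a * a < 1 := by rw [hca]; exact sin_arctan_lt_one _
  have hv : IntervalIntegrable (deriv u) MeasureTheory.volume 0 a :=
    h.differentiable_deriv.continuous.intervalIntegrable 0 a
  calc u a - u 0 = ∫ t in 0..a, deriv u t :=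
        (integral_deriv_eq_sub (fun x _ => h.differentiable x) hv).symm
    _ < ∫ t in 0..a, σ / a * t / √(1 - (σ / a * t) ^ 2) :=
        integral_lt_integral_of_lt_on_Ioo ha hv
          ((continuousOn_mul_div_sqrt_one_sub_sq hc.le hca1).intervalIntegrable_of_Icc ha.le)
          fun t ht => h.deriv_lt hκ hu0 hdu0 ht
    _ = (1 - cos (inclination u a)) / (σ / a) := by
        rw [integral_mul_div_sqrt_one_sub_sq ha.le hc hca1, hca, sqrt_one_sub_sin_inclination_sq]
    _ = a * (1 - cos (inclination u a)) / σ := by field_simp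

theorem integral_two_mul_sub_mul_deriv_lt (h : IsCapillarySolution κ a u) (hκ : 0 < κ)
    (ha : 0 < a) (hu0 : 0 < u 0) (hdu0 : deriv u 0 = 0) :
    ∫ t in 0..a, (2 * t - a) * deriv u t < (inclination u a -
      sin (inclination u a) * cos (inclination u a)) / (2 * (sin (inclination u a) / a) ^ 2) := by
  have hσ := h.sin_inclination_pos hκ ha hu0 hdu0
  set σ := sin (inclination u a)
  have hc : 0 < σ / a := div_pos hσ ha
  have hca : σ / a * a = σ := div_mul_cancel₀ σ ha.ne'
  have hca1 : σ / a * a < 1 := by rw [hca]; exact sin_arctan_lt_one _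
  have hv := h.differentiable_deriv.continuous
  have hlt : ∀ t ∈ Ioo 0 a,
      (2 * t - a) * deriv u t < t * (σ / a * t / √(1 - (σ / a * t) ^ 2)) := fun t ht => by
    have hvt := h.deriv_pos hκ hu0 hdu0 (Ioo_subset_Ioc_self ht)
    calc (2 * t - a) * deriv u t < t * deriv u t := by nlinarith [ht.2]
      _ < _ := mul_lt_mul_of_pos_left (h.deriv_lt hκ hu0 hdu0 ht) ht.1
  calc _ < ∫ t in 0..a, t * (σ / a * t / √(1 - (σ / a * t) ^ 2)) :=
        integral_lt_integral_of_lt_on_Ioo ha (Continuous.intervalIntegrable (by fun_prop) 0 a)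
          ((continuousOn_id.mul (continuousOn_mul_div_sqrt_one_sub_sq hc.le
            hca1)).intervalIntegrable_of_Icc ha.le) hlt
    _ = _ := by
        rw [integral_mul_mul_div_sqrt_one_sub_sq ha.le hc hca1, hca,
          sqrt_one_sub_sin_inclination_sq, arcsin_sin_inclination]

theorem add_lt (h : IsCapillarySolution κ a u) (hκ : 0 < κ) (ha : 0 < a) (hu0 : 0 < u 0)
    (hdu0 : deriv u 0 = 0) :
    u a + u 0 < 2 * sin (inclination u a) / (κ * a) + a * (inclination u a -
      sin (inclination u a) * cos (inclination u a)) / (2 * sin (inclination u a) ^ 2) := by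
  have hσ := h.sin_inclination_pos hκ ha hu0 hdu0
  have hmean : ∫ t in 0..a, u t = sin (inclination u a) / κ := by
    rw [eq_div_iff hκ.ne', mul_comm, h.integral_eq_sin_inclination ha.le hdu0]
  have hparts := two_mul_integral_add_integral_mul_deriv h.differentiable
    h.differentiable_deriv.continuous (a := a)
  have hcmp := h.integral_two_mul_sub_mul_deriv_lt hκ ha hu0 hdu0
  set σ := sin (inclination u a)
  refine lt_of_mul_lt_mul_left ?_ ha.le
  calc a * (u a + u 0) = 2 * (σ / κ) + ∫ t in 0..a, (2 * t - a) * deriv u t := by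
        rw [← hparts, hmean]
    _ < 2 * (σ / κ) + (inclination u a - σ * cos (inclination u a)) / (2 * (σ / a) ^ 2) := by
        linarith
    _ = _ := by field_simp

theorem sub_gt (h : IsCapillarySolution κ a u) (hκ : 0 < κ) (ha : 0 < a) (hu0 : 0 < u 0)
    (hdu0 : deriv u 0 = 0) :
    2 * (1 - cos (inclination u a)) / (κ * (2 * sin (inclination u a) / (κ * a) +
      a * (inclination u a - sin (inclination u a) * cos (inclination u a)) /
        (2 * sin (inclination u a) ^ 2))) < u a - u 0 := by
  have hψ := h.inclination_pos hκ hu0 hdu0 (right_mem_Ioc.2 ha)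
  have hcos : cos (inclination u a) < cos 0 :=
    cos_lt_cos_of_nonneg_of_le_pi_div_two le_rfl (arctan_lt_pi_div_two _).le hψ
  rw [cos_zero] at hcos
  have hsum : 0 < u a + u 0 := by linarith [h.pos hκ hu0 hdu0 (right_mem_Icc.2 ha.le)]
  calc _ < 2 * (1 - cos (inclination u a)) / (κ * (u a + u 0)) :=
        div_lt_div_of_pos_left (by linarith) (by positivity)
          (mul_lt_mul_of_pos_left (h.add_lt hκ ha hu0 hdu0) hκ)
    _ = u a - u 0 := by
        rw [div_eq_iff (by positivity), ← h.energy ha.le hdu0]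
        ring

end IsCapillarySolution

/-- 2(1 − sin γ)/(κ f(γ)) < u(a) − u₀ < a(1 − sin γ)/cos γ,
where f(γ) = 2cos γ/(κa) − (a tan γ)/2 + (a/(2cos²γ))(π/2 − γ). -/
theorem stmt_16 (κ a u₀ γ : ℝ) (hκ : 0 < κ) (ha : 0 < a) (u : ℝ → ℝ)
    (hu : Differentiable ℝ u) (hu' : Differentiable ℝ (deriv u))
    (hode : ∀ r ∈ Set.Icc (0 : ℝ) a,
      deriv (deriv u) r = κ * u r * (1 + (deriv u r) ^ 2) ^ ((3 : ℝ) / 2))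
    (hu0 : u 0 = u₀) (hu₀pos : 0 < u₀) (hdu0 : deriv u 0 = 0)
    (hγ0 : 0 ≤ γ) (hγ1 : γ < Real.pi / 2)
    (hangle : deriv u a / Real.sqrt (1 + (deriv u a) ^ 2) = Real.cos γ) :
    2 * (1 - Real.sin γ) /
      (κ * (2 * Real.cos γ / (κ * a) - a * Real.tan γ / 2 +
        (a / (2 * (Real.cos γ) ^ 2)) * (Real.pi / 2 - γ))) < u a - u₀ ∧
    u a - u₀ < a * (1 - Real.sin γ) / Real.cos γ := by
  have h : IsCapillarySolution κ a u := ⟨hu, hu', hode⟩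
  have hpos : 0 < u 0 := hu0 ▸ hu₀pos
  have hψ : inclination u a = π / 2 - γ := by
    rw [← arcsin_sin_inclination, inclination, sin_arctan, hangle, ← sin_pi_div_two_sub,
      arcsin_sin (by linarith) (by linarith [pi_pos])]
  have hcos : 0 < cos γ := cos_pos_of_mem_Ioo ⟨by linarith, hγ1⟩
  have hf : 2 * cos γ / (κ * a) - a * tan γ / 2 + a / (2 * cos γ ^ 2) * (π / 2 - γ) =
      2 * cos γ / (κ * a) + a * (π / 2 - γ - cos γ * sin γ) / (2 * cos γ ^ 2) := by
    rw [tan_eq_sin_div_cos]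
    field_simp
    ring
  have hlower := h.sub_gt hκ ha hpos hdu0
  have hupper := h.sub_lt hκ ha hpos hdu0
  rw [hψ, sin_pi_div_two_sub, cos_pi_div_two_sub, hu0] at hlower hupper
  exact ⟨hf ▸ hlower, hupper⟩
end
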